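/- Let K be a field, let m be a positive integer, and let a, b ∈ K. Set φ = x + a y^2 + b y^3 in K[x,y]. (i) The number of triples (c,d,e) of non-negative integers with c ≥ 1 and 4c + 2d + e equal to either 4m or 4m+1 is exactly 2m^2. (ii) The images in K[x,y]/(x, y^2)^{2m} of the 2m^2 polynomials φ^c x^d y^e, for (c,d,e) ranging over these triples, span the image of the ideal (φ, y^4)^m in K[x,y]/(x, y^2)^{2m}; since that image has dimension 2m^2, these images form a basis of it. -/

import Mathlib

/-!
Write `𝔪 = (x, y²)`, `𝔟 = (φ, y⁴)` and give `φ^c x^d y^e` the order `4c + 2d + e`. Since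
`𝔪² ⊆ 𝔟`, products of order `≥ 4m` lie in `𝔟^m`, and they span `𝔟^m` over `K`. Expanding one
factor `φ = x + a y² + b y³` writes a product of order `≥ 4m + 2` through products of order
`≥ 4m` with one factor `φ` fewer, while a product with `2c + 2d + e ≥ 4m` already lies in
`𝔪^{2m}`; so modulo `𝔪^{2m}` only the orders `4m` and `4m + 1` are needed.

For independence, the part of `φ^c x^d y^e` of top `x`-degree is `x^{c+d} y^e`. On the triples
these leading monomials are distinct, and they have weight `2(c + d) + e < 4m` for
`deg x = 2, deg y = 1`, whereas all monomials of elements of `𝔪^{2m}` have weight `≥ 4m`.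
-/

set_option synthInstance.maxHeartbeats 400000

open MvPolynomial

/-- The polynomial `φ = x + a y² + b y³`, i.e. the image of `x` under the automorphism
`g(a,b)` of `K[x,y]`. -/
noncomputable def phiPoly (K : Type*) [Field K] (a b : K) : MvPolynomial (Fin 2) K :=
  X 0 + C a * X 1 ^ 2 + C b * X 1 ^ 3

/-- The set of triples `(c,d,e)` of non-negative integers with `c ≥ 1` and
`4c + 2d + e ∈ {4m, 4m+1}`. -/
def tripleSet (m : ℕ) : Set (ℕ × ℕ × ℕ) :=
  {p | 1 ≤ p.1 ∧
    (4 * p.1 + 2 * p.2.1 + p.2.2 = 4 * m ∨ 4 * p.1 + 2 * p.2.1 + p.2.2 = 4 * m + 1)}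

section WeightIdeal

variable {R σ : Type*} [CommSemiring R] (w : σ → ℕ)

theorem coeff_mul_eq_zero_of_weight_lt {p q : MvPolynomial σ R} {s t : ℕ}
    (hp : ∀ μ, Finsupp.weight w μ < s → coeff μ p = 0)
    (hq : ∀ μ, Finsupp.weight w μ < t → coeff μ q = 0)
    {μ : σ →₀ ℕ} (hμ : Finsupp.weight w μ < s + t) : coeff μ (p * q) = 0 := by
  classical
  rw [coeff_mul]
  refine Finset.sum_eq_zero fun ⟨μ₁, μ₂⟩ hμ₁₂ => ?_
  rw [Finset.HasAntidiagonal.mem_antidiagonal] at hμ₁₂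
  have hsum : Finsupp.weight w μ₁ + Finsupp.weight w μ₂ < s + t := by
    rwa [← map_add, hμ₁₂]
  rcases lt_or_ge (Finsupp.weight w μ₁) s with h | h
  · rw [hp μ₁ h, zero_mul]
  · rw [hq μ₂ (by omega), mul_zero]

variable (R) in
def weightGeIdeal (n : ℕ) : Ideal (MvPolynomial σ R) where
  carrier := {p | ∀ μ, Finsupp.weight w μ < n → coeff μ p = 0}
  add_mem' hp hq μ hμ := by rw [coeff_add, hp μ hμ, hq μ hμ, add_zero]
  zero_mem' _ _ := coeff_zero _
  smul_mem' _ _ hp _ hμ :=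
    coeff_mul_eq_zero_of_weight_lt w (s := 0) (fun _ h => absurd h (Nat.not_lt_zero _)) hp
      (by rwa [zero_add])

theorem monomial_mem_weightGeIdeal (μ : σ →₀ ℕ) (r : R) :
    monomial μ r ∈ weightGeIdeal R w (Finsupp.weight w μ) := fun ν hν => by
  classical
  rw [coeff_monomial, if_neg (by rintro rfl; exact lt_irrefl _ hν)]

theorem weightGeIdeal_mul_le (s t : ℕ) :
    weightGeIdeal R w s * weightGeIdeal R w t ≤ weightGeIdeal R w (s + t) :=
  Ideal.mul_le.mpr fun _ hp _ hq _ hμ => coeff_mul_eq_zero_of_weight_lt w hp hq hμ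

theorem weightGeIdeal_pow_le (k n : ℕ) :
    weightGeIdeal R w k ^ n ≤ weightGeIdeal R w (n * k) := by
  induction n with
  | zero => intro p _ μ hμ; simp at hμ
  | succ n ih =>
    rw [pow_succ, Nat.succ_mul]
    exact (Ideal.mul_mono_left ih).trans (weightGeIdeal_mul_le w _ _)

theorem X_mem_weightGeIdeal (i : σ) : X i ∈ weightGeIdeal R w (w i) := by
  have h := monomial_mem_weightGeIdeal w (Finsupp.single i 1) (1 : R)
  rwa [Finsupp.weight_single, one_smul] at h

end WeightIdeal

theorem linearIndependent_comp_of_triangular {ι κ R M N : Type*} [LinearOrder κ] [CommRing R]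
    [NoZeroDivisors R] [AddCommGroup M] [Module R M] [AddCommGroup N] [Module R N]
    (π : M →ₗ[R] N) {v : ι → M} (f : ι → M →ₗ[R] R) (key : ι → κ)
    (hker : ∀ i, ∀ x ∈ LinearMap.ker π, f i x = 0) (hdiag : ∀ i, f i (v i) ≠ 0)
    (hlower : ∀ i j, j ≠ i → key j ≤ key i → f i (v j) = 0) :
    LinearIndependent R (π ∘ v) := by
  classical
  rw [linearIndependent_iff']
  intro s g hsum i hi
  by_contra hgi
  obtain ⟨j, hj, hmax⟩ := (s.filter (g · ≠ 0)).exists_max_image key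
    ⟨i, Finset.mem_filter.mpr ⟨hi, hgi⟩⟩
  rw [Finset.mem_filter] at hj
  have hzero : f j (∑ k ∈ s, g k • v k) = 0 :=
    hker j _ (by simpa only [LinearMap.mem_ker, map_sum, map_smul, Function.comp_apply] using hsum)
  rw [map_sum, Finset.sum_eq_single j] at hzero
  · exact mul_ne_zero hj.2 (hdiag j) (by simpa using hzero)
  · intro k hk hkj
    by_cases hgk : g k = 0
    · simp [hgk]
    · simp [hlower j k hkj (hmax k (Finset.mem_filter.mpr ⟨hk, hgk⟩))]
  · exact fun h => absurd hj.1 h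

theorem MvPolynomial.mul_mem_of_forall_X_mul_mem {R σ : Type*} [CommSemiring R]
    (M : Submodule R (MvPolynomial σ R)) (hX : ∀ i, ∀ f ∈ M, X i * f ∈ M)
    (r : MvPolynomial σ R) {f : MvPolynomial σ R} (hf : f ∈ M) : r * f ∈ M := by
  induction r using MvPolynomial.induction_on generalizing f with
  | C c => rw [← smul_eq_C_mul]; exact M.smul_mem c hf
  | add p q hp hq => rw [add_mul]; exact add_mem (hp hf) (hq hf)
  | mul_X p i hp => rw [mul_comm p, mul_assoc]; exact hX i _ (hp hf)

theorem Submodule.mul_mem_of_mem_span {R A : Type*} [CommSemiring R] [Semiring A] [Algebra R A]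
    {s : Set A} {N : Submodule R A} (r : A) (hs : ∀ y ∈ s, r * y ∈ N) {x : A}
    (hx : x ∈ Submodule.span R s) : r * x ∈ N :=
  (Submodule.map_span_le (LinearMap.mulLeft R r) s N).mpr hs ⟨x, hx, rfl⟩

theorem Ideal.span_image_mk_eq_restrictScalars_map {K S : Type*} [CommRing K] [CommRing S]
    [Algebra K S] {I J : Ideal S} {s : Set S}
    (h : Submodule.span K s ⊔ I.restrictScalars K = J.restrictScalars K) :
    Submodule.span K (Ideal.Quotient.mk I '' s) =
      (J.map (Ideal.Quotient.mk I)).restrictScalars K := by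
  set π := (Ideal.Quotient.mkₐ K I).toLinearMap
  have hπ : ⇑π = Ideal.Quotient.mk I := by ext; simp [π, Ideal.Quotient.mkₐ_eq_mk]
  have hker : LinearMap.ker π = I.restrictScalars K := by
    ext; simp [hπ, Ideal.Quotient.eq_zero_iff_mem]
  have hmap : (Submodule.span K s).map π = (J.restrictScalars K).map π := by
    apply le_antisymm <;> rw [LinearMap.map_le_map_iff, hker, ← h]
    exact le_sup_left.trans le_sup_left
  rw [← hπ, ← Submodule.map_span, hmap]
  ext x
  simp [hπ, Ideal.mem_map_iff_of_surjective _ Ideal.Quotient.mk_surjective]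

theorem mem_tripleSet {m c d e : ℕ} :
    (c, d, e) ∈ tripleSet m ↔ 1 ≤ c ∧ (4 * c + 2 * d + e = 4 * m ∨ 4 * c + 2 * d + e = 4 * m + 1) :=
  Iff.rfl

-- With `k = m - c`, the `2k + 1` admissible values of `d` fold onto the shell `max i j = k` of
-- `[0, m)²`, and `e % 2 = 4c + 2d + e - 4m`.
def shellFold (m : ℕ) : ℕ × ℕ × ℕ → ℕ × ℕ × ℕ
  | (c, d, e) => if d ≤ m - c then (m - c, d, e % 2) else (2 * (m - c) - d, m - c, e % 2)

theorem ncard_tripleSet (m : ℕ) : (tripleSet m).ncard = 2 * m ^ 2 := by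
  have hcard : (tripleSet m).ncard =
      (Set.Iio m ×ˢ Set.Iio m ×ˢ Set.Iio 2).ncard := by
    refine Set.ncard_congr (fun p _ => shellFold m p) ?_ ?_ ?_
    · rintro ⟨c, d, e⟩ hp
      rw [mem_tripleSet] at hp
      simp only [shellFold]
      split_ifs <;> simp only [Set.mem_prod, Set.mem_Iio] <;> omega
    · rintro ⟨c, d, e⟩ ⟨c', d', e'⟩ hp hp' h
      rw [mem_tripleSet] at hp hp'
      simp only [shellFold] at h
      split_ifs at h <;> simp only [Prod.mk.injEq] at h ⊢ <;> omega
    · rintro ⟨i, j, ε⟩ h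
      simp only [Set.mem_prod, Set.mem_Iio] at h
      rcases le_or_gt j i with hji | hij
      · refine ⟨(m - i, j, 4 * i - 2 * j + ε), mem_tripleSet.mpr (by omega), ?_⟩
        simp only [shellFold]
        split_ifs <;> simp only [Prod.mk.injEq, true_and] <;> omega
      · refine ⟨(m - j, 2 * j - i, 2 * i + ε), mem_tripleSet.mpr (by omega), ?_⟩
        simp only [shellFold]
        split_ifs <;> simp only [Prod.mk.injEq] <;> omega
  rw [hcard, Set.ncard_prod, Set.ncard_prod, ← Finset.coe_range, ← Finset.coe_range,
    Set.ncard_coe_finset, Set.ncard_coe_finset, Finset.card_range, Finset.card_range]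
  ring

theorem single_add_single_eq_iff {s t s' t' : ℕ} :
    (Finsupp.single 0 s + Finsupp.single 1 t : Fin 2 →₀ ℕ) =
      Finsupp.single 0 s' + Finsupp.single 1 t' ↔ s = s' ∧ t = t' := by
  refine ⟨fun h => ⟨?_, ?_⟩, by rintro ⟨rfl, rfl⟩; rfl⟩
  · simpa using DFunLike.congr_fun h 0
  · simpa using DFunLike.congr_fun h 1

section Orbit

variable {K : Type*} [Field K] (a b : K)

local notation "𝔪" => Ideal.span {(X 0 : MvPolynomial (Fin 2) K), X 1 ^ 2}
local notation "𝔟" => Ideal.span {phiPoly K a b, (X 1 : MvPolynomial (Fin 2) K) ^ 4}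

noncomputable def phiMonomial (p : ℕ × ℕ × ℕ) : MvPolynomial (Fin 2) K :=
  phiPoly K a b ^ p.1 * X 0 ^ p.2.1 * X 1 ^ p.2.2

-- The weights `φ ↦ 4, x ↦ 2, y ↦ 1` reflect `φ, y⁴, x², x y² ∈ 𝔟`.
def phiOrder (p : ℕ × ℕ × ℕ) : ℕ := 4 * p.1 + 2 * p.2.1 + p.2.2

theorem phiMonomial_succ (c d e : ℕ) :
    phiMonomial a b (c + 1, d, e) = phiMonomial a b (c, d + 1, e) +
      a • phiMonomial a b (c, d, e + 2) + b • phiMonomial a b (c, d, e + 3) := by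
  simp only [phiMonomial, phiPoly, smul_eq_C_mul]
  ring

theorem coeff_phiMonomial {c d e s t : ℕ} (h : c + d ≤ s) :
    coeff (Finsupp.single 0 s + Finsupp.single 1 t) (phiMonomial a b (c, d, e)) =
      if s = c + d ∧ t = e then 1 else 0 := by
  induction c generalizing d e with
  | zero =>
    simp only [phiMonomial, pow_zero, one_mul, X_pow_eq_monomial, monomial_mul, coeff_monomial,
      single_add_single_eq_iff, zero_add, eq_comm]
  | succ c ih =>
    rw [phiMonomial_succ, coeff_add, coeff_add, coeff_smul, coeff_smul, ih (by omega),
      ih (by omega), ih (by omega)]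
    split_ifs <;> first | omega | simp

theorem phiPoly_mem_span : phiPoly K a b ∈ 𝔪 := by
  rw [Ideal.mem_span_pair]
  exact ⟨1, C a + C b * X 1, by rw [phiPoly]; ring⟩

theorem phiMonomial_mem_pow (c d e : ℕ) : phiMonomial a b (c, d, e) ∈ 𝔪 ^ (c + d + e / 2) := by
  have hy : (X 1 : MvPolynomial (Fin 2) K) ^ e = X 1 ^ (e % 2) * (X 1 ^ 2) ^ (e / 2) := by
    rw [← pow_mul, ← pow_add, Nat.mod_add_div]
  rw [phiMonomial, hy, pow_add 𝔪, pow_add 𝔪]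
  refine Ideal.mul_mem_mul (Ideal.mul_mem_mul (Ideal.pow_mem_pow (phiPoly_mem_span a b) c)
    (Ideal.pow_mem_pow (Ideal.subset_span (by simp)) d)) (Ideal.mul_mem_left _ _ ?_)
  exact Ideal.pow_mem_pow (Ideal.subset_span (by simp)) _

theorem sq_le_orbitIdeal : 𝔪 ^ 2 ≤ 𝔟 := by
  rw [pow_two, Ideal.span_mul_span', Ideal.span_le]
  rintro _ ⟨_, (rfl | rfl), _, (rfl | rfl), rfl⟩ <;> rw [SetLike.mem_coe, Ideal.mem_span_pair]
  · exact ⟨X 0 - (C a + C b * X 1) * X 1 ^ 2, (C a + C b * X 1) ^ 2, by rw [phiPoly]; ring⟩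
  · exact ⟨X 1 ^ 2, -(C a + C b * X 1), by rw [phiPoly]; ring⟩
  · exact ⟨X 1 ^ 2, -(C a + C b * X 1), by rw [phiPoly]; ring⟩
  · exact ⟨0, 1, by ring⟩

theorem phiMonomial_mem_orbitIdeal_pow {m c d e : ℕ} (hm : 4 * m ≤ phiOrder (c, d, e)) :
    phiMonomial a b (c, d, e) ∈ 𝔟 ^ m := by
  have hxy : phiMonomial a b (0, d, e) ∈ 𝔟 ^ (m - c) := by
    refine Ideal.pow_right_mono (sq_le_orbitIdeal a b) _ ?_
    rw [← pow_mul]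
    refine Ideal.pow_le_pow_right ?_ (phiMonomial_mem_pow a b 0 d e)
    simp only [phiOrder] at hm
    omega
  have hsplit : phiMonomial a b (c, d, e) = phiPoly K a b ^ c * phiMonomial a b (0, d, e) := by
    simp only [phiMonomial]; ring
  rw [hsplit]
  refine Ideal.pow_le_pow_right (by omega : m ≤ c + (m - c)) ?_
  rw [pow_add]
  exact Ideal.mul_mem_mul (Ideal.pow_mem_pow (Ideal.subset_span (by simp)) c) hxy

theorem pow_two_mul_le_orbitIdeal_pow (m : ℕ) : 𝔪 ^ (2 * m) ≤ 𝔟 ^ m := by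
  rw [pow_mul]
  exact Ideal.pow_right_mono (sq_le_orbitIdeal a b) m

noncomputable def phiMonomialSpan (n : ℕ) : Submodule K (MvPolynomial (Fin 2) K) :=
  Submodule.span K (phiMonomial a b '' {p | 4 * n ≤ phiOrder p})

theorem phiMonomial_mem_phiMonomialSpan {n : ℕ} {p : ℕ × ℕ × ℕ} (hp : 4 * n ≤ phiOrder p) :
    phiMonomial a b p ∈ phiMonomialSpan a b n :=
  Submodule.subset_span ⟨p, hp, rfl⟩

theorem mul_mem_phiMonomialSpan_add {n k : ℕ} (q : MvPolynomial (Fin 2) K)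
    (hq : ∀ p, ∃ p', phiOrder p + 4 * k ≤ phiOrder p' ∧ q * phiMonomial a b p = phiMonomial a b p')
    {f : MvPolynomial (Fin 2) K} (hf : f ∈ phiMonomialSpan a b n) :
    q * f ∈ phiMonomialSpan a b (n + k) := by
  refine Submodule.mul_mem_of_mem_span q ?_ hf
  rintro _ ⟨p, hp, rfl⟩
  obtain ⟨p', hp', heq⟩ := hq p
  rw [heq]
  exact phiMonomial_mem_phiMonomialSpan a b (by change 4 * n ≤ _ at hp; omega)

theorem mul_mem_phiMonomialSpan {n : ℕ} (r : MvPolynomial (Fin 2) K) {f : MvPolynomial (Fin 2) K}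
    (hf : f ∈ phiMonomialSpan a b n) : r * f ∈ phiMonomialSpan a b n := by
  refine MvPolynomial.mul_mem_of_forall_X_mul_mem _ (Fin.forall_fin_two.mpr ⟨?_, ?_⟩) r hf <;>
    refine fun g hg => mul_mem_phiMonomialSpan_add a b (k := 0) _ (fun ⟨c, d, e⟩ => ?_) hg
  · exact ⟨(c, d + 1, e), by simp only [phiOrder]; omega, by simp only [phiMonomial]; ring⟩
  · exact ⟨(c, d, e + 1), by simp only [phiOrder]; omega, by simp only [phiMonomial]; ring⟩

theorem orbitIdeal_pow_le_phiMonomialSpan (n : ℕ) :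
    (𝔟 ^ n).restrictScalars K ≤ phiMonomialSpan a b n := by
  induction n with
  | zero =>
    intro f _
    have hone : phiMonomial a b (0, 0, 0) = 1 := by simp [phiMonomial]
    simpa [hone] using mul_mem_phiMonomialSpan a b f
      (phiMonomial_mem_phiMonomialSpan a b (p := (0, 0, 0)) (Nat.zero_le _))
  | succ n ih =>
    have hφ : ∀ p, ∃ p', phiOrder p + 4 * 1 ≤ phiOrder p' ∧
        phiPoly K a b * phiMonomial a b p = phiMonomial a b p' := fun ⟨c, d, e⟩ =>
      ⟨(c + 1, d, e), by simp only [phiOrder]; omega, by simp only [phiMonomial]; ring⟩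
    have hy : ∀ p, ∃ p', phiOrder p + 4 * 1 ≤ phiOrder p' ∧
        X 1 ^ 4 * phiMonomial a b p = phiMonomial a b p' := fun ⟨c, d, e⟩ =>
      ⟨(c, d, e + 4), by simp only [phiOrder]; omega, by simp only [phiMonomial]; ring⟩
    intro f hf
    rw [Submodule.restrictScalars_mem, pow_succ'] at hf
    refine Submodule.mul_induction_on hf (fun s hs r hr => ?_) (fun _ _ => add_mem)
    obtain ⟨v, w, rfl⟩ := Ideal.mem_span_pair.mp hs
    rw [add_mul, mul_assoc, mul_assoc]
    exact add_mem (mul_mem_phiMonomialSpan a b v (mul_mem_phiMonomialSpan_add a b _ hφ (ih hr)))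
      (mul_mem_phiMonomialSpan a b w (mul_mem_phiMonomialSpan_add a b _ hy (ih hr)))

theorem phiMonomial_mem_span_tripleSet_sup {m : ℕ} (p : ℕ × ℕ × ℕ) (hp : 4 * m ≤ phiOrder p) :
    phiMonomial a b p ∈
      Submodule.span K (phiMonomial a b '' tripleSet m) ⊔ (𝔪 ^ (2 * m)).restrictScalars K := by
  obtain ⟨c, d, e⟩ := p
  dsimp only [phiOrder] at hp
  induction c generalizing d e with
  | zero =>
    exact Submodule.mem_sup_right
      (Ideal.pow_le_pow_right (by omega) (phiMonomial_mem_pow a b 0 d e))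
  | succ c ih =>
    by_cases hI : 4 * m ≤ 2 * (c + 1) + 2 * d + e
    · exact Submodule.mem_sup_right
        (Ideal.pow_le_pow_right (by omega) (phiMonomial_mem_pow a b (c + 1) d e))
    by_cases hT : 4 * (c + 1) + 2 * d + e ≤ 4 * m + 1
    · exact Submodule.mem_sup_left (Submodule.subset_span ⟨_, mem_tripleSet.mpr (by omega), rfl⟩)
    rw [phiMonomial_succ]
    exact add_mem (add_mem (ih _ _ (by omega)) (Submodule.smul_mem _ _ (ih _ _ (by omega))))
      (Submodule.smul_mem _ _ (ih _ _ (by omega)))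

theorem span_tripleSet_sup_eq (m : ℕ) :
    Submodule.span K (phiMonomial a b '' tripleSet m) ⊔ (𝔪 ^ (2 * m)).restrictScalars K =
      (𝔟 ^ m).restrictScalars K := by
  refine le_antisymm (sup_le ?_ (pow_two_mul_le_orbitIdeal_pow a b m)) ?_
  · rw [Submodule.span_le]
    rintro _ ⟨⟨c, d, e⟩, hp, rfl⟩
    rw [mem_tripleSet] at hp
    exact phiMonomial_mem_orbitIdeal_pow a b (by dsimp only [phiOrder]; omega)
  · refine (orbitIdeal_pow_le_phiMonomialSpan a b m).trans (Submodule.span_le.mpr ?_)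
    rintro _ ⟨p, hp, rfl⟩
    exact phiMonomial_mem_span_tripleSet_sup a b p hp

theorem span_le_weightGeIdeal : 𝔪 ≤ weightGeIdeal K ![2, 1] 2 := by
  rw [Ideal.span_le]
  rintro _ (rfl | rfl)
  · exact X_mem_weightGeIdeal ![2, 1] 0
  · simpa using weightGeIdeal_pow_le ![2, 1] 1 2 (Ideal.pow_mem_pow (X_mem_weightGeIdeal _ 1) 2)

theorem linearIndependent_mk_phiMonomial (m : ℕ) :
    LinearIndependent K
      (fun p : tripleSet m => Ideal.Quotient.mk (𝔪 ^ (2 * m)) (phiMonomial a b p)) := by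
  have hweight : 𝔪 ^ (2 * m) ≤ weightGeIdeal K ![2, 1] (2 * m * 2) :=
    (Ideal.pow_right_mono span_le_weightGeIdeal _).trans (weightGeIdeal_pow_le _ 2 (2 * m))
  refine linearIndependent_comp_of_triangular (Ideal.Quotient.mkₐ K (𝔪 ^ (2 * m))).toLinearMap
    (v := fun p : tripleSet m => phiMonomial a b p)
    (fun p => lcoeff K (Finsupp.single 0 (p.1.1 + p.1.2.1) + Finsupp.single 1 p.1.2.2))
    (fun p => p.1.1 + p.1.2.1) ?_ ?_ ?_
  · rintro ⟨⟨c, d, e⟩, hp⟩ f hf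
    rw [mem_tripleSet] at hp
    rw [LinearMap.mem_ker, AlgHom.toLinearMap_apply, Ideal.Quotient.mkₐ_eq_mk,
      Ideal.Quotient.eq_zero_iff_mem] at hf
    exact hweight hf _ (by simp [Finsupp.weight_single]; omega)
  · rintro ⟨⟨c, d, e⟩, hp⟩
    rw [lcoeff_apply, coeff_phiMonomial a b le_rfl, if_pos ⟨rfl, rfl⟩]
    exact one_ne_zero
  · rintro ⟨⟨c, d, e⟩, hp⟩ ⟨⟨c', d', e'⟩, hp'⟩ hne hle
    rw [mem_tripleSet] at hp hp'
    dsimp only at hle ⊢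
    rw [lcoeff_apply, coeff_phiMonomial a b hle, if_neg]
    rintro ⟨h1, h2⟩
    apply hne
    simp only [Subtype.mk.injEq, Prod.mk.injEq]
    omega

end Orbit

theorem basis_of_image_of_orbit_ideal_general
    (K : Type*) [Field K] (m : ℕ) (a b : K) :
    (tripleSet m).ncard = 2 * m ^ 2 ∧
    Submodule.span K
        ((Ideal.Quotient.mk
            ((Ideal.span {(X 0 : MvPolynomial (Fin 2) K), X 1 ^ 2}) ^ (2 * m))) ''
          ((fun p : ℕ × ℕ × ℕ =>
              phiPoly K a b ^ p.1 * X 0 ^ p.2.1 * X 1 ^ p.2.2) '' tripleSet m))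
      = Submodule.restrictScalars K
          (Ideal.map
            (Ideal.Quotient.mk
              ((Ideal.span {(X 0 : MvPolynomial (Fin 2) K), X 1 ^ 2}) ^ (2 * m)))
            ((Ideal.span {phiPoly K a b, X 1 ^ 4}) ^ m)) ∧
    LinearIndependent K (fun p : tripleSet m =>
      (Ideal.Quotient.mk
          ((Ideal.span {(X 0 : MvPolynomial (Fin 2) K), X 1 ^ 2}) ^ (2 * m)))
        (phiPoly K a b ^ (p : ℕ × ℕ × ℕ).1 * X 0 ^ (p : ℕ × ℕ × ℕ).2.1
          * X 1 ^ (p : ℕ × ℕ × ℕ).2.2)) :=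
  ⟨ncard_tripleSet m, Ideal.span_image_mk_eq_restrictScalars_map (span_tripleSet_sup_eq a b m),
    linearIndependent_mk_phiMonomial a b m⟩

/-- (i) There are exactly `2m²` triples `(c,d,e)` with `c ≥ 1` and
`4c + 2d + e ∈ {4m, 4m+1}`.  (ii) The images in `K[x,y]/(x,y²)^{2m}` of the polynomials
`φ^c x^d y^e`, for `(c,d,e)` ranging over these triples, span the image of the ideal
`(φ, y⁴)^m`, and (having the right cardinality) they form a basis of it, in particular
they are linearly independent. -/
theorem basis_of_image_of_orbit_ideal
    (K : Type*) [Field K] (m : ℕ) (hm : 1 ≤ m) (a b : K) :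
    (tripleSet m).ncard = 2 * m ^ 2 ∧
    Submodule.span K
        ((Ideal.Quotient.mk
            ((Ideal.span {(X 0 : MvPolynomial (Fin 2) K), X 1 ^ 2}) ^ (2 * m))) ''
          ((fun p : ℕ × ℕ × ℕ =>
              phiPoly K a b ^ p.1 * X 0 ^ p.2.1 * X 1 ^ p.2.2) '' tripleSet m))
      = Submodule.restrictScalars K
          (Ideal.map
            (Ideal.Quotient.mk
              ((Ideal.span {(X 0 : MvPolynomial (Fin 2) K), X 1 ^ 2}) ^ (2 * m)))
            ((Ideal.span {phiPoly K a b, X 1 ^ 4}) ^ m)) ∧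
    LinearIndependent K (fun p : tripleSet m =>
      (Ideal.Quotient.mk
          ((Ideal.span {(X 0 : MvPolynomial (Fin 2) K), X 1 ^ 2}) ^ (2 * m)))
        (phiPoly K a b ^ (p : ℕ × ℕ × ℕ).1 * X 0 ^ (p : ℕ × ℕ × ℕ).2.1
          * X 1 ^ (p : ℕ × ℕ × ℕ).2.2)) :=
  basis_of_image_of_orbit_ideal_general K m a b
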